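/- arXiv:1007.3819 — 10 statements merged into one kernel-verified Lean document; each statement's English description precedes it below -/
import Mathlib

section
/- Let β be a finite type with n = card β and let f : Set β → Set β be monotone. Then the n-fold iterate of f applied to the full set equals the greatest fixed point of f: f^[n] Set.univ = gfp f. -/
theorem iterate_card_univ_eq_gfp {β : Type*} [Fintype β]
    (f : Set β → Set β) (hf : Monotone f) :
    f^[Fintype.card β] Set.univ = OrderHom.gfp ⟨f, hf⟩ := by
  set n := Fintype.card β with hn
  have anti : ∀ k, f^[k+1] Set.univ ⊆ f^[k] Set.univ := by
    intro k
    rw [Function.iterate_succ_apply]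
    exact hf.iterate k (Set.subset_univ _)
  have key : f (f^[n] Set.univ) = f^[n] Set.univ := by
    by_cases h : ∃ k < n, f^[k+1] Set.univ = f^[k] Set.univ
    · obtain ⟨k, hk, he⟩ := h
      have stab : ∀ m, f^[k+m] Set.univ = f^[k] Set.univ := by
        intro m
        induction m with
        | zero => rfl
        | succ m ih =>
            have : f^[k + (m+1)] Set.univ = f (f^[k+m] Set.univ) := by
              rw [← Nat.add_assoc, Function.iterate_succ_apply']
            rw [this, ih]
            exact (Function.iterate_succ_apply' f k Set.univ).symm.trans he
      have h1 : f^[n] Set.univ = f^[k] Set.univ := by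
        have := stab (n - k)
        rwa [Nat.add_sub_cancel' hk.le] at this
      rw [h1]
      exact (Function.iterate_succ_apply' f k Set.univ).symm.trans he
    · push_neg at h
      have bound : ∀ k, k ≤ n → (f^[k] Set.univ).ncard ≤ n - k := by
        intro k hk
        induction k with
        | zero => simp [Set.ncard_univ, hn]
        | succ k ih =>
            have hk' : k < n := Nat.lt_of_succ_le hk
            have hss : f^[k+1] Set.univ ⊂ f^[k] Set.univ :=
              HasSubset.Subset.ssubset_of_ne (anti k) (h k hk')
            have hlt : (f^[k+1] Set.univ).ncard < (f^[k] Set.univ).ncard :=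
              Set.ncard_lt_ncard hss (Set.toFinite _)
            have := ih hk'.le
            omega
      have hempty : f^[n] Set.univ = ∅ := by
        have hb := bound n le_rfl
        have h0 : (f^[n] Set.univ).ncard = 0 := by omega
        exact (Set.ncard_eq_zero (Set.toFinite _)).mp h0
      have : f^[n+1] Set.univ ⊆ f^[n] Set.univ := anti n
      rw [Function.iterate_succ_apply'] at this
      rw [hempty] at this ⊢
      exact Set.eq_empty_iff_forall_notMem.mpr fun x hx => this hx
  apply le_antisymm
  · exact OrderHom.le_gfp _ (le_of_eq key.symm)
  · have hfix : f^[n] (OrderHom.gfp ⟨f, hf⟩) = OrderHom.gfp ⟨f, hf⟩ :=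
      Function.iterate_fixed (OrderHom.map_gfp ⟨f, hf⟩) n
    calc OrderHom.gfp ⟨f, hf⟩ = f^[n] (OrderHom.gfp ⟨f, hf⟩) := hfix.symm
      _ ≤ f^[n] Set.univ := hf.iterate n (Set.subset_univ _)
end

section
/- Let β be a finite type and let f : Set β → Set β be monotone. Then there exists a level mapping l : β → ℕ such that for every x ∈ lfp f, x ∈ f {y | y ∈ lfp f ∧ l y < l x}; that is, the membership of every element of the least fixed point is justified by elements of strictly smaller level. -/
/-! The Kleene iterates `f^[n] ∅` increase to the least fixed point, and on a finite type they
reach it after finitely many steps. Give `x` the index of the first stage containing it: then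
`x ∈ f^[l x] ∅ = f (f^[l x - 1] ∅)`, and everything in `f^[l x - 1] ∅` has level below `l x`. -/

namespace OrderHom

variable {α : Type*} [CompleteLattice α] (f : α →o α)

theorem iterate_bot_le_lfp (n : ℕ) : f^[n] ⊥ ≤ f.lfp := by
  induction n with
  | zero => exact bot_le
  | succ n ih => simpa only [Function.iterate_succ_apply'] using f.map_le_lfp ih

theorem exists_lfp_eq_iterate_bot [WellFoundedGT α] : ∃ n, f.lfp = f^[n] ⊥ := by
  have hchain : Monotone fun n => f^[n] ⊥ := f.monotone.monotone_iterate_of_le_map bot_le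
  obtain ⟨n, hn⟩ := WellFoundedGT.monotone_chain_condition ⟨_, hchain⟩
  refine ⟨n, le_antisymm (f.lfp_le ?_) (f.iterate_bot_le_lfp n)⟩
  have hfix : f^[n + 1] ⊥ = f^[n] ⊥ := (hn (n + 1) n.le_succ).symm
  rw [Function.iterate_succ_apply'] at hfix
  exact hfix.le

theorem exists_level_of_lfp_subset_iUnion_iterate {β : Type*} (f : Set β →o Set β)
    (h : f.lfp ⊆ ⋃ n, f^[n] ∅) :
    ∃ l : β → ℕ, ∀ x ∈ f.lfp, x ∈ f {y | y ∈ f.lfp ∧ l y < l x} := by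
  let l : β → ℕ := fun x => sInf {n | x ∈ f^[n] ∅}
  refine ⟨l, fun x hx => ?_⟩
  have hmem : x ∈ f^[l x] ∅ := Nat.sInf_mem (Set.mem_iUnion.mp (h hx))
  obtain ⟨m, hm⟩ : ∃ m, l x = m + 1 :=
    Nat.exists_eq_succ_of_ne_zero fun h0 => by simp [h0] at hmem
  rw [hm, Function.iterate_succ_apply'] at hmem
  refine f.monotone (fun y (hy : y ∈ f^[m] ∅) => ?_) hmem
  have hly : l y ≤ m := Nat.sInf_le hy
  exact ⟨f.iterate_bot_le_lfp m hy, by omega⟩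

end OrderHom

theorem lfp_level_mapping_sound {β : Type*} [Fintype β]
    (f : Set β → Set β) (hf : Monotone f) :
    ∃ l : β → ℕ, ∀ x ∈ OrderHom.lfp ⟨f, hf⟩,
      x ∈ f {y | y ∈ OrderHom.lfp ⟨f, hf⟩ ∧ l y < l x} := by
  obtain ⟨N, hN⟩ := OrderHom.exists_lfp_eq_iterate_bot ⟨f, hf⟩
  refine OrderHom.exists_level_of_lfp_subset_iUnion_iterate ⟨f, hf⟩ ?_
  rw [hN]
  exact Set.subset_iUnion (fun n => (⟨f, hf⟩ : Set β →o Set β)^[n] ∅) N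
end

section
/- Let β be any type, let f : Set β → Set β be monotone, and let S be a fixed point of f (f S = S). If there exists a level mapping l : β → ℕ such that for every x ∈ S, x ∈ f {y | y ∈ S ∧ l y < l x}, then S = lfp f. -/
theorem OrderHom.subset_lfp_of_level_justified {β α : Type*} [Preorder α] [WellFoundedLT α]
    (f : Set β →o Set β) {S : Set β} (l : β → α)
    (hl : ∀ x ∈ S, x ∈ f {y | y ∈ S ∧ l y < l x}) : S ⊆ OrderHom.lfp f := by
  intro x
  induction x using (InvImage.wf l wellFounded_lt).induction with
  | h x ih =>
    intro hx
    rw [← f.map_lfp]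
    exact f.mono (fun y hy => ih y hy.2 hy.1) (hl x hx)

theorem lfp_level_mapping_complete {β : Type*}
    (f : Set β → Set β) (hf : Monotone f) (S : Set β) (hS : f S = S)
    (h : ∃ l : β → ℕ, ∀ x ∈ S, x ∈ f {y | y ∈ S ∧ l y < l x}) :
    S = OrderHom.lfp ⟨f, hf⟩ := by
  obtain ⟨l, hl⟩ := h
  exact le_antisymm (OrderHom.subset_lfp_of_level_justified ⟨f, hf⟩ l hl)
    (OrderHom.lfp_le _ hS.le)
end

section
/- Let β be a finite type and let f : Set β → Set β be monotone. Then there exists a level mapping l : β → ℕ such that for every x ∉ gfp f, x ∉ f {y | y ∈ gfp f ∨ l x ≤ l y}; that is, the falsity of every element outside the greatest fixed point is justified using only elements of strictly smaller level among the false ones. -/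
/-!
On a finite powerset lattice the Kleene iterates `f^[n] univ` decrease and stabilise after finitely
many steps, and the stable value is `gfp f`. Give `x ∉ gfp f` the level of the first iterate it is
missing from, say `m + 1`. Every `y` in `gfp f` or of level at least `m + 1` lies in `f^[m] univ`,
so by monotonicity `f {y | y ∈ gfp f ∨ l x ≤ l y} ⊆ f^[m + 1] univ`, which does not contain `x`.
-/

namespace OrderHom

variable {α : Type*} [CompleteLattice α] (F : α →o α)

theorem gfp_le_iterate_top (n : ℕ) : F.gfp ≤ F^[n] ⊤ := by
  induction n with
  | zero => exact le_top
  | succ n ih => rw [Function.iterate_succ_apply']; exact F.gfp_le_map ih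

theorem exists_iterate_top_le_gfp [WellFoundedLT α] : ∃ n, F^[n] ⊤ ≤ F.gfp := by
  obtain ⟨n, hn⟩ :=
    WellFoundedLT.antitone_chain_condition (F.monotone.antitone_iterate_of_map_le le_top)
  refine ⟨n, F.le_gfp ?_⟩
  rw [← Function.iterate_succ_apply' F, ← hn (n + 1) n.le_succ]

end OrderHom

namespace Set

variable {β : Type*}

open Classical in
/-- The first index `n` with `x ∉ s n`, or `0` if `x` belongs to every `s n`. -/
noncomputable def dropIndex (s : ℕ → Set β) (x : β) : ℕ :=
  if h : ∃ n, x ∉ s n then Nat.find h else 0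

open Classical in
theorem mem_of_lt_dropIndex {s : ℕ → Set β} {x : β} {n : ℕ} (hn : n < dropIndex s x) :
    x ∈ s n := by
  unfold dropIndex at hn
  split_ifs at hn with h
  · exact not_not.mp (Nat.find_min h hn)
  · exact not_not.mp (not_exists.mp h n)

open Classical in
theorem notMem_dropIndex {s : ℕ → Set β} {x : β} (h : ∃ n, x ∉ s n) :
    x ∉ s (dropIndex s x) := by
  rw [dropIndex, dif_pos h]
  exact Nat.find_spec h

end Set

theorem gfp_level_mapping_sound {β : Type*} [Fintype β]
    (f : Set β → Set β) (hf : Monotone f) :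
    ∃ l : β → ℕ, ∀ x ∉ OrderHom.gfp ⟨f, hf⟩,
      x ∉ f {y | y ∈ OrderHom.gfp ⟨f, hf⟩ ∨ l x ≤ l y} := by
  set F : Set β →o Set β := ⟨f, hf⟩
  set s : ℕ → Set β := fun n => F^[n] Set.univ
  obtain ⟨a, ha⟩ := F.exists_iterate_top_le_gfp
  refine ⟨Set.dropIndex s, fun x hx hmem => ?_⟩
  have hdrop : ∃ n, x ∉ s n := ⟨a, fun h => hx (ha h)⟩
  obtain ⟨m, hm⟩ : ∃ m, Set.dropIndex s x = m + 1 :=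
    Nat.exists_eq_add_one.mpr <| Nat.pos_of_ne_zero fun h0 =>
      Set.notMem_dropIndex hdrop (h0 ▸ Set.mem_univ x)
  have hjust : {y | y ∈ F.gfp ∨ Set.dropIndex s x ≤ Set.dropIndex s y} ⊆ s m := by
    rintro y (hy | hy)
    · exact F.gfp_le_iterate_top m hy
    · exact Set.mem_of_lt_dropIndex (by omega)
  apply Set.notMem_dropIndex hdrop
  rw [hm]
  show x ∈ F^[m + 1] Set.univ
  rw [Function.iterate_succ_apply']
  exact F.monotone hjust hmem
end

section
/- Let β be any type, let f : Set β → Set β be monotone, and let S be a fixed point of f (f S = S). If there exists a level mapping l : β → ℕ such that for every x ∉ S, x ∉ f {y | y ∈ S ∨ l x ≤ l y}, then S = gfp f. -/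
/-! A level mapping turns coinduction into well-founded induction: a post-fixed point `T` of `f`
that left `S` would contain a point `x ∉ S` of least level, and then `T ⊆ S ∪ {y | l x ≤ l y}`
forces `x ∈ f T ⊆ f (S ∪ {y | l x ≤ l y})`, contradicting the level-mapping constraint. Hence every
post-fixed point, and so `gfp f`, lies inside `S`; the reverse inclusion holds since `S = f S`. -/

theorem Set.subset_of_postfixed_of_levelMapping {β α : Type*} [LinearOrder α] [WellFoundedLT α]
    {f : Set β → Set β} (hf : Monotone f) {S T : Set β} (l : β → α)
    (hl : ∀ x ∉ S, x ∉ f {y | y ∈ S ∨ l x ≤ l y}) (hT : T ⊆ f T) : T ⊆ S := by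
  by_contra hTS
  obtain ⟨x, ⟨hxT, hxS⟩, hx_min⟩ :=
    (InvImage.wf l wellFounded_lt).has_min (T \ S) (Set.sdiff_nonempty.mpr hTS)
  have hT_above : T ⊆ {y | y ∈ S ∨ l x ≤ l y} := fun y hyT =>
    or_iff_not_imp_left.mpr fun hyS => not_lt.mp (hx_min y ⟨hyT, hyS⟩)
  exact hl x hxS (hf hT_above (hT hxT))

theorem gfp_level_mapping_complete {β : Type*}
    (f : Set β → Set β) (hf : Monotone f) (S : Set β) (hS : f S = S)
    (h : ∃ l : β → ℕ, ∀ x ∉ S, x ∉ f {y | y ∈ S ∨ l x ≤ l y}) :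
    S = OrderHom.gfp ⟨f, hf⟩ := by
  obtain ⟨l, hl⟩ := h
  exact le_antisymm (OrderHom.le_gfp _ hS.symm.le)
    (OrderHom.gfp_le _ fun _ hT => Set.subset_of_postfixed_of_levelMapping hf l hl hT)
end

section
/- Let β be a type, f : Set β → Set β monotone, and r : β → β → Prop a well-founded relation such that f depends at each point only on strictly r-smaller points: for all S T : Set β and all x, if (∀ y, r y x → (y ∈ S ↔ y ∈ T)) then (x ∈ f S ↔ x ∈ f T). Then lfp f = gfp f, and consequently f has a unique fixed point. -/
/-! Fixed points of `f` agree by well-founded induction along `r`: membership of `x` in a fixed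
point is membership in its image, which is decided by the `r`-predecessors of `x`. Monotonicity
is needed only for the existence of a fixed point. -/

theorem Set.eq_of_fixedPoints_of_wellFounded {β : Type*} {f : Set β → Set β}
    {r : β → β → Prop} (hwf : WellFounded r)
    (hdep : ∀ S T : Set β, ∀ x, (∀ y, r y x → (y ∈ S ↔ y ∈ T)) → (x ∈ f S ↔ x ∈ f T))
    {S T : Set β} (hS : f S = S) (hT : f T = T) : S = T := by
  ext x
  induction x using hwf.induction with
  | _ x ih =>
    calc x ∈ S ↔ x ∈ f S := by rw [hS]
      _ ↔ x ∈ f T := hdep S T x ih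
      _ ↔ x ∈ T := by rw [hT]

theorem wellfounded_dependency_unique_fixpoint {β : Type*}
    (f : Set β → Set β) (hf : Monotone f) (r : β → β → Prop)
    (hwf : WellFounded r)
    (hdep : ∀ S T : Set β, ∀ x, (∀ y, r y x → (y ∈ S ↔ y ∈ T)) → (x ∈ f S ↔ x ∈ f T)) :
    OrderHom.lfp ⟨f, hf⟩ = OrderHom.gfp ⟨f, hf⟩ ∧ ∃! S : Set β, f S = S := by
  set F : Set β →o Set β := ⟨f, hf⟩
  have fixedPoints_eq {S T : Set β} (hS : f S = S) (hT : f T = T) : S = T :=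
    Set.eq_of_fixedPoints_of_wellFounded hwf hdep hS hT
  exact ⟨fixedPoints_eq F.map_lfp F.map_gfp,
    OrderHom.lfp F, F.map_lfp, fun _ hS => fixedPoints_eq hS F.map_lfp⟩
end

section
/- Let β be a type, T : β → β → Prop a transition relation and R : Set β. For P : Set β define the monotone operator Φ_P : Set β → Set β by Φ_P Y = {x | (x ∈ R ∧ ∃ y, T x y ∧ y ∈ P) ∨ (∃ y, T x y ∧ y ∈ Y)}, and define the monotone operator Ψ : Set β → Set β by Ψ P = lfp Φ_P. Then for every x : β, x ∈ gfp Ψ if and only if there exists an infinite path p : ℕ → β with p 0 = x, T (p n) (p (n+1)) for all n, and for every n there exists m ≥ n with p m ∈ R; i.e., x has an infinite path passing infinitely often through a state satisfying R. -/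
/-!
A state lies in `lfp Φ_P` iff it has a finite path to an `R`-state with a successor in `P`.
Hence the set of states with a path visiting `R` infinitely often is a post-fixed point of `Ψ`,
so it lies below `gfp Ψ`. Conversely, `G = gfp Ψ` satisfies `G = lfp Φ_G`; ranking each state of
`G` by the first Kleene approximant `Φ_G^[n] ⊥` containing it, every state of `G` has a successor
in `G` that either leaves an `R`-state or has smaller rank, and following such successors gives a
path that meets `R` infinitely often.
-/

/-- The inner operator `Φ_P Y = {x | (x ∈ R ∧ ∃ y, T x y ∧ y ∈ P) ∨ (∃ y, T x y ∧ y ∈ Y)}`,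
bundled with its monotonicity. -/
def PhiHom {β : Type*} (T : β → β → Prop) (R P : Set β) : Set β →o Set β :=
  ⟨fun Y => {x | (x ∈ R ∧ ∃ y, T x y ∧ y ∈ P) ∨ (∃ y, T x y ∧ y ∈ Y)},
   fun _Y _Z hYZ _x hx => hx.imp id (fun ⟨y, hTy, hy⟩ => ⟨y, hTy, hYZ hy⟩)⟩

/-- The outer operator `Ψ P = lfp Φ_P`, bundled with its monotonicity. -/
def PsiHom {β : Type*} (T : β → β → Prop) (R : Set β) : Set β →o Set β :=
  ⟨fun P => OrderHom.lfp (PhiHom T R P),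
   fun _P _P' hPP' => OrderHom.lfp.monotone
     (fun _Y _x hx => hx.imp (fun ⟨hR, y, hT, hy⟩ => ⟨hR, y, hT, hPP' hy⟩) id)⟩

open OrderHom

lemma OrderHom.iterate_bot_le_lfp_s10 {α : Type*} [CompleteLattice α] (f : α →o α) (n : ℕ) :
    f^[n] ⊥ ≤ lfp f :=
  Function.iterate_fixed (map_lfp f) n ▸ f.monotone.iterate n bot_le

section

variable {β : Type*} (T : β → β → Prop) (R : Set β)

def recurrentStates : Set β :=
  {x | ∃ p : ℕ → β, p 0 = x ∧ (∀ n, T (p n) (p (n + 1))) ∧ ∀ n, ∃ m ≥ n, p m ∈ R}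

lemma mem_recurrentStates_of_path {p : ℕ → β} (hT : ∀ n, T (p n) (p (n + 1)))
    (hR : ∀ n, ∃ m ≥ n, p m ∈ R) (k : ℕ) : p k ∈ recurrentStates T R := by
  refine ⟨fun i => p (i + k), by simp, fun n => by simpa [Nat.add_right_comm] using hT (n + k),
    fun n => ?_⟩
  obtain ⟨m, hm, hmR⟩ := hR (n + k)
  exact ⟨m - k, by omega, by simpa only [Nat.sub_add_cancel (by omega : k ≤ m)]⟩

lemma mem_recurrentStates_of_rank_decreasing {G : Set β} (rank : β → ℕ)
    (hG : ∀ z ∈ G, ∃ y ∈ G, T z y ∧ (z ∈ R ∨ rank y < rank z)) {x : β} (hx : x ∈ G) :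
    x ∈ recurrentStates T R := by
  choose! f hfG hfT hfR using hG
  have hiter : ∀ n, f^[n] x ∈ G := by
    intro n
    induction n with
    | zero => exact hx
    | succ n ih => rw [Function.iterate_succ_apply']; exact hfG _ ih
  have hreach : ∀ z ∈ G, ∃ m, f^[m] z ∈ R := by
    intro z
    induction z using (measure rank).wf.induction with
    | h z ih =>
      intro hz
      rcases hfR z hz with hzR | hlt
      · exact ⟨0, hzR⟩
      · obtain ⟨m, hm⟩ := ih (f z) hlt (hfG z hz)
        exact ⟨m + 1, hm⟩
  refine ⟨fun n => f^[n] x, rfl, fun n => ?_, fun n => ?_⟩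
  · dsimp only
    rw [Function.iterate_succ_apply']
    exact hfT _ (hiter n)
  · obtain ⟨m, hm⟩ := hreach _ (hiter n)
    exact ⟨m + n, by omega, by dsimp only; rwa [Function.iterate_add_apply]⟩

section Phi

variable {T R} {P : Set β}

lemma path_zero_mem_lfp_phiHom {p : ℕ → β} (hT : ∀ n, T (p n) (p (n + 1))) {m : ℕ}
    (hR : p m ∈ R) (hP : p (m + 1) ∈ P) : p 0 ∈ lfp (PhiHom T R P) := by
  induction m generalizing p with
  | zero =>
    rw [← map_lfp]
    exact Or.inl ⟨hR, p 1, hT 0, hP⟩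
  | succ m ih =>
    rw [← map_lfp]
    exact Or.inr ⟨p 1, hT 0, ih (p := fun i => p (i + 1)) (fun n => hT (n + 1)) hR hP⟩

lemma lfp_phiHom_subset_iUnion_iterate :
    lfp (PhiHom T R P) ⊆ ⋃ n, (PhiHom T R P)^[n] ⊥ := by
  refine lfp_le _ ?_
  rintro x (hx | ⟨y, hTy, hy⟩)
  · exact Set.mem_iUnion.2 ⟨1, Or.inl hx⟩
  · obtain ⟨n, hn⟩ := Set.mem_iUnion.1 hy
    refine Set.mem_iUnion.2 ⟨n + 1, ?_⟩
    rw [Function.iterate_succ_apply']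
    exact Or.inr ⟨y, hTy, hn⟩

variable (T R P) in
noncomputable def phiRank (x : β) : ℕ :=
  sInf {n | x ∈ (PhiHom T R P)^[n] ⊥}

lemma exists_succ_of_mem_lfp_phiHom {z : β} (hz : z ∈ lfp (PhiHom T R P)) :
    ∃ y, T z y ∧ ((z ∈ R ∧ y ∈ P) ∨
      (y ∈ lfp (PhiHom T R P) ∧ phiRank T R P y < phiRank T R P z)) := by
  have hmem : z ∈ (PhiHom T R P)^[phiRank T R P z] ⊥ :=
    Nat.sInf_mem (Set.mem_iUnion.1 (lfp_phiHom_subset_iUnion_iterate hz))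
  obtain ⟨k, hk⟩ : ∃ k, phiRank T R P z = k + 1 :=
    Nat.exists_eq_succ_of_ne_zero fun h => by rw [h] at hmem; exact hmem
  rw [hk, Function.iterate_succ_apply'] at hmem
  rcases hmem with ⟨hzR, y, hTy, hy⟩ | ⟨y, hTy, hy⟩
  · exact ⟨y, hTy, Or.inl ⟨hzR, hy⟩⟩
  · exact ⟨y, hTy, Or.inr ⟨Set.mem_of_subset_of_mem (iterate_bot_le_lfp_s10 _ k) hy,
      hk ▸ Nat.lt_succ_of_le (Nat.sInf_le hy)⟩⟩

end Phi

lemma recurrentStates_subset_psiHom : recurrentStates T R ⊆ PsiHom T R (recurrentStates T R) := by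
  rintro _ ⟨p, rfl, hT, hR⟩
  obtain ⟨m, -, hm⟩ := hR 0
  exact path_zero_mem_lfp_phiHom hT hm (mem_recurrentStates_of_path T R hT hR (m + 1))

lemma gfp_psiHom_subset_recurrentStates : gfp (PsiHom T R) ⊆ recurrentStates T R := by
  set G := gfp (PsiHom T R)
  have hG : lfp (PhiHom T R G) = G := map_gfp (PsiHom T R)
  refine fun x => mem_recurrentStates_of_rank_decreasing T R (phiRank T R G) fun z hz => ?_
  rw [← hG] at hz
  obtain ⟨y, hTy, ⟨hzR, hy⟩ | ⟨hy, hlt⟩⟩ := exists_succ_of_mem_lfp_phiHom hz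
  · exact ⟨y, hy, hTy, Or.inl hzR⟩
  · exact ⟨y, hG ▸ hy, hTy, Or.inr hlt⟩

lemma gfp_psiHom_eq_recurrentStates : gfp (PsiHom T R) = recurrentStates T R :=
  (gfp_psiHom_subset_recurrentStates T R).antisymm (le_gfp _ (recurrentStates_subset_psiHom T R))

end

theorem gfp_psi_iff_infinitely_often {β : Type*} (T : β → β → Prop) (R : Set β) (x : β) :
    x ∈ OrderHom.gfp (PsiHom T R) ↔
      ∃ p : ℕ → β, p 0 = x ∧ (∀ n, T (p n) (p (n + 1))) ∧
        ∀ n, ∃ m ≥ n, p m ∈ R := by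
  rw [gfp_psiHom_eq_recurrentStates]
  rfl
end

section
/- Let β be a type, T : β → β → Prop a transition relation and R : Set β. For P : Set β define the monotone operator Φ_P : Set β → Set β by Φ_P Y = {x | (x ∈ R ∧ ∃ y, T x y ∧ y ∈ P) ∨ (∃ y, T x y ∧ y ∈ Y)}, and define the monotone operator Ψ : Set β → Set β by Ψ P = lfp Φ_P. Then for every n : ℕ and every x : β, x ∈ Ψ^[n] Set.univ if and only if there exist k : ℕ and p : ℕ → β with p 0 = x, T (p i) (p (i+1)) for all i < k, and at least n indices i < k satisfy p i ∈ R; i.e., in the n-th iteration of the outer fixpoint, x belongs to the computed set iff x has a finite path that goes at least n times through vertices with property R. -/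
open Set

namespace PsiHom

variable {β : Type*} (T : β → β → Prop) (R : Set β)

def visitsAtLeast (n : ℕ) : Set β :=
  {x | ∃ (k : ℕ) (p : ℕ → β), p 0 = x ∧ (∀ i < k, T (p i) (p (i + 1))) ∧
    n ≤ {i | i < k ∧ p i ∈ R}.ncard}

open Classical in
theorem ncard_visits_succ (p : ℕ → β) (k : ℕ) :
    {i | i < k + 1 ∧ p i ∈ R}.ncard =
      {i | i < k ∧ p (i + 1) ∈ R}.ncard + if p 0 ∈ R then 1 else 0 := by
  have h_finset (k : ℕ) (q : ℕ → β) :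
      {i | i < k ∧ q i ∈ R} = ↑((Finset.range k).filter (q · ∈ R)) := by
    ext; simp
  rw [h_finset, h_finset, ncard_coe_finset, ncard_coe_finset, Finset.card_filter,
    Finset.card_filter, Finset.sum_range_succ']

theorem visitsAtLeast_zero : visitsAtLeast T R 0 = univ :=
  eq_univ_of_forall fun x => ⟨0, fun _ => x, rfl, by simp, by simp⟩

theorem visitsAtLeast_antitone : Antitone (visitsAtLeast T R) :=
  fun _ _ hmn _ ⟨k, p, hp0, hp, hn⟩ => ⟨k, p, hp0, hp, hmn.trans hn⟩

variable {T R}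

open Classical in
theorem mem_visitsAtLeast_of_step {n : ℕ} {x y : β} (hxy : T x y)
    (hy : y ∈ visitsAtLeast T R n) :
    x ∈ visitsAtLeast T R (n + if x ∈ R then 1 else 0) := by
  obtain ⟨k, p, rfl, hp, hn⟩ := hy
  refine ⟨k + 1, fun | 0 => x | i + 1 => p i, rfl, ?_, ?_⟩
  · rintro (_ | i) hi
    exacts [hxy, hp i (by omega)]
  · rw [ncard_visits_succ]
    exact Nat.add_le_add_right hn _

theorem visitsAtLeast_succ_eq_lfp (n : ℕ) :
    visitsAtLeast T R (n + 1) = OrderHom.lfp (PhiHom T R (visitsAtLeast T R n)) := by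
  refine le_antisymm ?_ (OrderHom.lfp_le _ ?_)
  · rintro x ⟨k, p, rfl, hp, hn⟩
    induction k generalizing p with
    | zero => simp at hn
    | succ k ih =>
      have hp_tail : ∀ i < k, T (p (i + 1)) (p (i + 1 + 1)) :=
        fun i hi => hp (i + 1) (by omega)
      rw [ncard_visits_succ] at hn
      rw [← OrderHom.map_lfp]
      by_cases hR : p 0 ∈ R
      · simp only [hR, if_true] at hn
        exact Or.inl ⟨hR, p 1, hp 0 (by omega), k, fun i => p (i + 1), rfl, hp_tail,
          Nat.le_of_succ_le_succ hn⟩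
      · simp only [hR, if_false, add_zero] at hn
        exact Or.inr ⟨p 1, hp 0 (by omega), ih _ hp_tail hn⟩
  · rintro x (⟨hR, y, hxy, hy⟩ | ⟨y, hxy, hy⟩)
    · simpa [hR] using mem_visitsAtLeast_of_step hxy hy
    · exact visitsAtLeast_antitone T R (Nat.le_add_right _ _) (mem_visitsAtLeast_of_step hxy hy)

variable (T R) in
theorem iterate_univ (n : ℕ) : (⇑(PsiHom T R))^[n] univ = visitsAtLeast T R n := by
  induction n with
  | zero => exact (visitsAtLeast_zero T R).symm
  | succ n ih =>
    rw [Function.iterate_succ_apply', ih, visitsAtLeast_succ_eq_lfp]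
    rfl

end PsiHom

theorem psi_iterate_iff_path_through_R {β : Type*} (T : β → β → Prop) (R : Set β)
    (n : ℕ) (x : β) :
    x ∈ (⇑(PsiHom T R))^[n] Set.univ ↔
      ∃ (k : ℕ) (p : ℕ → β), p 0 = x ∧ (∀ i < k, T (p i) (p (i + 1))) ∧
        n ≤ {i | i < k ∧ p i ∈ R}.ncard := by
  rw [PsiHom.iterate_univ]
  rfl
end

section
/- Let β be a finite type, E : β → β → Prop an edge relation and A : Set β a set of states (those carrying label a). For P : Set β define the monotone operator Φ_P : Set β → Set β by Φ_P Y = {x | ∀ y, E x y → ((y ∈ A ∧ y ∈ P) ∨ y ∈ Y)}, and define the monotone operator Ψ : Set β → Set β by Ψ P = lfp Φ_P. Then for every x : β, x ∈ gfp Ψ if and only if every infinite path p : ℕ → β with p 0 = x and E (p n) (p (n+1)) for all n visits A infinitely often, i.e., for every n there exists m ≥ n with p m ∈ A. -/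
/-- The inner operator `Φ_P Y = {x | ∀ y, E x y → ((y ∈ A ∧ y ∈ P) ∨ y ∈ Y)}`,
bundled with its monotonicity. -/
def FairPhiHom {β : Type*} (E : β → β → Prop) (A P : Set β) : Set β →o Set β :=
  ⟨fun Y => {x | ∀ y, E x y → ((y ∈ A ∧ y ∈ P) ∨ y ∈ Y)},
   fun _Y _Z hYZ _x hx y hE => (hx y hE).imp id (fun hy => hYZ hy)⟩

/-- The outer operator `Ψ P = lfp Φ_P`, bundled with its monotonicity. -/
def FairPsiHom {β : Type*} (E : β → β → Prop) (A : Set β) : Set β →o Set β :=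
  ⟨fun P => OrderHom.lfp (FairPhiHom E A P),
   fun _P _P' hPP' => OrderHom.lfp.monotone
     (fun _Y _x hx y hE => (hx y hE).imp (fun ⟨hA, hP⟩ => ⟨hA, hPP' hP⟩) id)⟩

/-!
`Ψ P` is the set of states from which every infinite path enters `A ∩ P` after at least one
step: the least fixed point `μY` rules out infinite paths that avoid `A ∩ P` forever, and
conversely from a state outside `μY` one can always step to a successor outside `μY` that is
not in `A ∩ P`. The set of fair states is closed under edges, so it is a post-fixed point of
`Ψ`; and from a post-fixed point `G` of `Ψ` every path keeps re-entering `A ∩ G`, so `G`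
consists of fair states. Hence the fair states form the greatest fixed point of `Ψ`.
-/

open OrderHom

section Fair

variable {β : Type*}

def IsPath (R : β → β → Prop) (p : ℕ → β) : Prop :=
  ∀ n, R (p n) (p (n + 1))

def fairSet (E : β → β → Prop) (A : Set β) : Set β :=
  {x | ∀ p : ℕ → β, p 0 = x → IsPath E p → ∀ n, ∃ m ≥ n, p m ∈ A}

namespace IsPath

variable {R : β → β → Prop} {p : ℕ → β}

theorem shift (hp : IsPath R p) (n : ℕ) : IsPath R (fun k => p (n + k)) :=
  fun k => hp (n + k)

theorem cons {z : β} (hz : R z (p 0)) (hp : IsPath R p) : IsPath R (Stream'.cons z p)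
  | 0 => hz
  | k + 1 => hp k

theorem mono {R' : β → β → Prop} (hRR' : ∀ x y, R x y → R' x y) (hp : IsPath R p) :
    IsPath R' p :=
  fun n => hRR' _ _ (hp n)

theorem forall_mem {S : Set β} (hS : ∀ x y, R x y → x ∈ S → y ∈ S) (hp : IsPath R p)
    (h0 : p 0 ∈ S) : ∀ k, p k ∈ S
  | 0 => h0
  | k + 1 => hS _ _ (hp k) (hp.forall_mem hS h0 k)

end IsPath

theorem exists_isPath_of_forall_exists {R : β → β → Prop} {S : Set β}
    (hS : ∀ y ∈ S, ∃ w ∈ S, R y w) {z : β} (hz : z ∈ S) :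
    ∃ p : ℕ → β, p 0 = z ∧ IsPath R p := by
  choose f hfS hfR using hS
  let q : ℕ → S := fun n => (fun y : S => (⟨f y y.2, hfS y y.2⟩ : S))^[n] ⟨z, hz⟩
  refine ⟨fun n => q n, rfl, fun n => ?_⟩
  simp only [q, Function.iterate_succ_apply']
  exact hfR _ _

section Fixpoints

variable {E : β → β → Prop} {A : Set β}

theorem mem_fairPhiHom {P Y : Set β} {x : β} :
    x ∈ FairPhiHom E A P Y ↔ ∀ y, E x y → (y ∈ A ∧ y ∈ P) ∨ y ∈ Y :=
  Iff.rfl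

theorem fairPsiHom_apply (P : Set β) : FairPsiHom E A P = lfp (FairPhiHom E A P) :=
  rfl

theorem fairPsiHom_eq (P : Set β) :
    FairPsiHom E A P =
      {x | ∀ p : ℕ → β, p 0 = x → IsPath E p → ∃ m ≥ 1, p m ∈ A ∧ p m ∈ P} := by
  rw [fairPsiHom_apply]
  apply le_antisymm
  · refine lfp_le _ fun z hz p hp0 hp => ?_
    subst hp0
    rcases mem_fairPhiHom.mp hz (p 1) (hp 0) with hAP | hY
    · exact ⟨1, le_rfl, hAP⟩
    · obtain ⟨m, hm, hAP⟩ := hY (fun k => p (1 + k)) rfl (hp.shift 1)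
      exact ⟨1 + m, by omega, hAP⟩
  · intro z hz
    by_contra hzL
    -- Outside `lfp Φ_P = Φ_P (lfp Φ_P)` there is always a successor that is again outside
    -- and not in `A ∩ P`.
    have hstep : ∀ y ∈ (lfp (FairPhiHom E A P))ᶜ, ∃ w ∈ (lfp (FairPhiHom E A P))ᶜ,
        E y w ∧ (w ∈ A → w ∉ P) := by
      intro y hy
      rw [Set.mem_compl_iff, ← map_lfp, mem_fairPhiHom] at hy
      push Not at hy
      obtain ⟨w, hE, hAP, hL⟩ := hy
      exact ⟨w, hL, hE, hAP⟩
    obtain ⟨p, hp0, hp⟩ := exists_isPath_of_forall_exists hstep hzL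
    obtain ⟨m, hm, hA, hP⟩ := hz p hp0 (hp.mono fun _ _ h => h.1)
    obtain ⟨k, rfl⟩ := Nat.exists_eq_add_of_le' hm
    exact (hp k).2 hA hP

theorem mem_fairSet_of_edge {x y : β} (hx : x ∈ fairSet E A) (hxy : E x y) :
    y ∈ fairSet E A := by
  intro p hp0 hp n
  obtain ⟨m, hm, hA⟩ := hx (Stream'.cons x p) rfl (hp.cons (hp0 ▸ hxy)) (n + 1)
  obtain ⟨k, rfl⟩ := Nat.exists_eq_add_of_le' (n.succ_pos.trans_le hm)
  exact ⟨k, by omega, hA⟩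

theorem fairSet_subset_fairPsiHom : fairSet E A ⊆ FairPsiHom E A (fairSet E A) := by
  rw [fairPsiHom_eq]
  intro x hx p hp0 hp
  obtain ⟨m, hm, hA⟩ := hx p hp0 hp 1
  exact ⟨m, hm, hA, hp.forall_mem (fun _ _ => flip mem_fairSet_of_edge) (hp0 ▸ hx) m⟩

theorem subset_fairSet_of_subset_fairPsiHom {G : Set β} (hG : G ⊆ FairPsiHom E A G) :
    G ⊆ fairSet E A := by
  intro x hx p hp0 hp
  have hnext : ∀ m, p m ∈ G → ∃ k ≥ m + 1, p k ∈ A ∧ p k ∈ G := by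
    intro m hm
    rw [fairPsiHom_eq] at hG
    obtain ⟨j, hj, hAG⟩ := hG hm (fun k => p (m + k)) rfl (hp.shift m)
    exact ⟨m + j, by omega, hAG⟩
  have hG_often : ∀ n, ∃ m ≥ n, p m ∈ G := by
    intro n
    induction n with
    | zero => exact ⟨0, le_rfl, hp0 ▸ hx⟩
    | succ n ih =>
      obtain ⟨m, hm, hmG⟩ := ih
      obtain ⟨k, hk, -, hkG⟩ := hnext m hmG
      exact ⟨k, by omega, hkG⟩
  intro n
  obtain ⟨m, hm, hmG⟩ := hG_often n
  obtain ⟨k, hk, hkA, -⟩ := hnext m hmG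
  exact ⟨k, by omega, hkA⟩

theorem gfp_fairPsiHom : gfp (FairPsiHom E A) = fairSet E A :=
  le_antisymm
    (subset_fairSet_of_subset_fairPsiHom (map_gfp _).ge)
    (le_gfp _ fairSet_subset_fairPsiHom)

end Fixpoints

end Fair

theorem gfp_fairPsi_iff_fair_general {β : Type*}
    (E : β → β → Prop) (A : Set β) (x : β) :
    x ∈ OrderHom.gfp (FairPsiHom E A) ↔
      ∀ p : ℕ → β, p 0 = x → (∀ n, E (p n) (p (n + 1))) →
        ∀ n, ∃ m ≥ n, p m ∈ A := by
  rw [gfp_fairPsiHom]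
  rfl

theorem gfp_fairPsi_iff_fair {β : Type*} [Fintype β]
    (E : β → β → Prop) (A : Set β) (x : β) :
    x ∈ OrderHom.gfp (FairPsiHom E A) ↔
      ∀ p : ℕ → β, p 0 = x → (∀ n, E (p n) (p (n + 1))) →
        ∀ n, ∃ m ≥ n, p m ∈ A :=
  gfp_fairPsi_iff_fair_general E A x
end

section
/- Define F : Set ℕ → Set ℕ by F E = {n | n = 0 ∨ ∃ m, n = m + 1 ∧ m ∈ gfp (fun _ : Set ℕ => {k | k ≠ 0 ∧ ∀ j, k = j + 1 → j ∈ E})}. Then F is monotone, lfp F = {n : ℕ | Even n}, and the inner greatest fixpoint evaluated at E = lfp F equals the complement {n : ℕ | ¬ Even n}. -/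
/-- The inner (constant) operator of the greatest fixpoint definition for `Even¬`,
given the current interpretation `E` of `Even`. -/
def EvenNegHom (E : Set ℕ) : Set ℕ →o Set ℕ :=
  ⟨fun _ => {k | k ≠ 0 ∧ ∀ j, k = j + 1 → j ∈ E}, monotone_const⟩

/-- The outer operator: `F E = {n | n = 0 ∨ ∃ m, n = m + 1 ∧ m ∈ gfp (EvenNegHom E)}`. -/
def EvenOp (E : Set ℕ) : Set ℕ :=
  {n | n = 0 ∨ ∃ m, n = m + 1 ∧ m ∈ OrderHom.gfp (EvenNegHom E)}

lemma gfp_evenNeg (E : Set ℕ) :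
    OrderHom.gfp (EvenNegHom E) = {k | k ≠ 0 ∧ ∀ j, k = j + 1 → j ∈ E} := by
  have := OrderHom.map_gfp (EvenNegHom E)
  exact this.symm

lemma evenOp_eq (E : Set ℕ) :
    EvenOp E = {n | n = 0 ∨ ∃ m, n = m + 1 ∧ m ≠ 0 ∧ ∀ j, m = j + 1 → j ∈ E} := by
  simp only [EvenOp, gfp_evenNeg]; rfl

lemma evenOp_mono : Monotone EvenOp := by
  intro A B hAB n hn
  rw [evenOp_eq] at hn ⊢
  rcases hn with h0 | ⟨m, rfl, hm0, hm⟩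
  · exact Or.inl h0
  · exact Or.inr ⟨m, rfl, hm0, fun j hj => hAB (hm j hj)⟩

theorem even_alternating_fixpoint :
    ∃ hF : Monotone EvenOp,
      OrderHom.lfp ⟨EvenOp, hF⟩ = {n : ℕ | Even n} ∧
      OrderHom.gfp (EvenNegHom (OrderHom.lfp ⟨EvenOp, hF⟩)) = {n : ℕ | ¬ Even n} := by
  refine ⟨evenOp_mono, ?_⟩
  set f : Set ℕ →o Set ℕ := ⟨EvenOp, evenOp_mono⟩ with hf
  have hfix : EvenOp (OrderHom.lfp f) = OrderHom.lfp f := OrderHom.map_lfp f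
  have hle : OrderHom.lfp f ≤ {n : ℕ | Even n} := by
    apply OrderHom.lfp_le
    intro n hn
    have hn : n ∈ EvenOp {n : ℕ | Even n} := hn
    rw [evenOp_eq] at hn
    rcases hn with rfl | ⟨m, rfl, hm0, hm⟩
    · exact Even.zero
    · obtain ⟨j, rfl⟩ := Nat.exists_eq_succ_of_ne_zero hm0
      have hj : Even j := hm j rfl
      simpa [Nat.even_add_one, Nat.even_add_one] using hj
  have hge : ∀ n : ℕ, Even n → n ∈ OrderHom.lfp f := by
    intro n
    induction n using Nat.strong_induction_on with
    | _ n ih =>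
      intro hn
      rw [← hfix, evenOp_eq]
      rcases n with _ | (_ | k)
      · exact Or.inl rfl
      · simp at hn
      · refine Or.inr ⟨k + 1, rfl, by simp, fun j hj => ?_⟩
        have : j = k := by omega
        subst this
        exact ih j (by omega) (by simpa [Nat.even_add_one, Nat.even_add_one] using hn)
  have heq : OrderHom.lfp f = {n : ℕ | Even n} := le_antisymm hle (fun n hn => hge n hn)
  refine ⟨heq, ?_⟩
  rw [gfp_evenNeg, heq]
  ext k
  simp only [Set.mem_setOf_eq]
  constructor
  · rintro ⟨hk0, hk⟩ hkeven
    rcases k with _ | j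
    · exact hk0 rfl
    · have : Even j := hk j rfl
      simp [Nat.even_add_one, this] at hkeven
  · intro hk
    refine ⟨fun h => hk (by simp [h]), fun j hj => ?_⟩
    subst hj
    simpa [Nat.even_add_one] using hk
end
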